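/- Let (Θ, Ω, f : Θ → Z) be a cardinal implementation problem such that f is surjective and Θ^una ∩ Θ^strict ⊆ Θ ⊆ Θ^strict. If f is UD-implemented by a stochastic finite-action mechanism M = ⟨S, g⟩, then for every i ∈ I and all z, z′ ∈ Z with z ≠ z′, the inclusion S_i^z ⊆ S_i^{z′} implies S_i^z = S_i^{z′} = S_i. -/
import Mathlib


open Function

noncomputable section

/-- A lottery (probability distribution) on the finite outcome set `Z`. -/
def Lottery (Z : Type) [Fintype Z] : Type :=
  {y : Z → ℝ // (∀ z, 0 ≤ y z) ∧ ∑ z, y z = 1}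

variable {Z : Type} [Fintype Z]

/-- The degenerate lottery on the outcome `z`. -/
def Lottery.delta [DecidableEq Z] (z : Z) : Lottery Z :=
  ⟨fun z' => if z' = z then 1 else 0, fun z' => by positivity, by simp⟩

/-- Expected utility of the lottery `y` under the vN-M utility function `u`. -/
def expUtil (u : Z → ℝ) (y : Lottery Z) : ℝ := ∑ z, y.1 z * u z

variable {I : Type} [DecidableEq I] {S : I → Type}

/-- `s_i` is strictly dominated (for agent `i`, at cardinal state `u`, in the mechanism
with outcome function `g`) on the product set `×_j T j`. -/
def Dominated (u : I → Z → ℝ) (g : (∀ i, S i) → Lottery Z)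
    (T : ∀ j, Set (S j)) (i : I) (si : S i) : Prop :=
  ∃ si' : S i, ∀ s : ∀ j, S j, (∀ j, j ≠ i → s j ∈ T j) →
    expUtil (u i) (g (update s i si)) < expUtil (u i) (g (update s i si'))

/-- `UDk u g k i` is the set of strategies of agent `i` surviving `k` rounds of iterative
deletion of strictly dominated strategies at the cardinal state `u` (`UDk u g 0 i = S i`). -/
def UDk (u : I → Z → ℝ) (g : (∀ i, S i) → Lottery Z) : ℕ → ∀ i, Set (S i)
  | 0 => fun _ => Set.univ
  | (k + 1) => fun i => {si ∈ UDk u g k i | ¬ Dominated u g (UDk u g k) i si}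

/-- `UD(M,u)`: profiles surviving one round of deletion. -/
def UDoneSet (u : I → Z → ℝ) (g : (∀ i, S i) → Lottery Z) : Set (∀ i, S i) :=
  {s | ∀ i, s i ∈ UDk u g 1 i}

/-- `UD^∞(M,u)`: profiles surviving iterative deletion (all rounds `k ≥ 1`). -/
def UDinfSet (u : I → Z → ℝ) (g : (∀ i, S i) → Lottery Z) : Set (∀ i, S i) :=
  {s | ∀ i, ∀ k : ℕ, s i ∈ UDk u g (k + 1) i}

/-- `S_i^z`: strategies of agent `i` from which the degenerate outcome `z` is reachable. -/
def Sz [DecidableEq Z] (g : (∀ i, S i) → Lottery Z) (i : I) (z : Z) : Set (S i) :=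
  {si | ∃ s : ∀ j, S j, s i = si ∧ g s = Lottery.delta z}

/-- `×_j T j` satisfies the non-domination property at `u`. -/
def NonDomProp (u : I → Z → ℝ) (g : (∀ i, S i) → Lottery Z) (T : ∀ j, Set (S j)) : Prop :=
  ∀ i, ∀ si ∈ T i, ∀ si' : S i, ∃ s : ∀ j, S j, (∀ j, j ≠ i → s j ∈ T j) ∧
    expUtil (u i) (g (update s i si')) ≤ expUtil (u i) (g (update s i si))

/-- `u` is a cardinal representation of the ordinal state `θ`. -/
def Represents (u : I → Z → ℝ) (θ : I → Z → Z → Prop) : Prop :=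
  ∀ i z z', θ i z z' ↔ u i z' ≤ u i z

/-- `Θ*`: all ordinal states (complete and transitive preference profiles). -/
def ThetaStar (I Z : Type) : Set (I → Z → Z → Prop) :=
  {θ | ∀ i, (∀ z z', θ i z z' ∨ θ i z' z) ∧ Transitive (θ i)}

/-- `Θ^una`: ordinal states where all agents have identical preferences. -/
def ThetaUna (I Z : Type) : Set (I → Z → Z → Prop) :=
  {θ ∈ ThetaStar I Z | ∀ i j z z', θ i z z' ↔ θ j z z'}

/-- `Θ^strict`: ordinal states where no agent has non-trivial indifference. -/
def ThetaStrict (I Z : Type) : Set (I → Z → Z → Prop) :=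
  {θ ∈ ThetaStar I Z | ∀ i z z', θ i z z' → θ i z' z → z = z'}

/-- The strict part `≻_i^θ`. -/
def StrictPref (θ : I → Z → Z → Prop) (i : I) (z z' : Z) : Prop := θ i z z' ∧ ¬ θ i z' z

/-- Agent `i` is a dictator for `f` on `Θ`. -/
def Dictator (Θ : Set (I → Z → Z → Prop)) (f : (I → Z → Z → Prop) → Z) (i : I) : Prop :=
  ∀ θ ∈ Θ, ∀ z, z ≠ f θ → StrictPref θ i (f θ) z

/-- `(Θ, Ω)` form a cardinal implementation problem: `Θ` is a set of ordinal states, every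
member of `Ω` is a cardinal representation of some `θ ∈ Θ`, and `Ω_θ ≠ ∅` for all `θ ∈ Θ`. -/
def CIProblem (Θ : Set (I → Z → Z → Prop)) (Ω : Set (I → Z → ℝ)) : Prop :=
  Θ ⊆ ThetaStar I Z ∧ (∀ u ∈ Ω, ∃ θ ∈ Θ, Represents u θ) ∧
    ∀ θ ∈ Θ, ∃ u ∈ Ω, Represents u θ

/-- `f` is UD-implemented by the mechanism with outcome function `g`. -/
def UDImplements [DecidableEq Z] (Θ : Set (I → Z → Z → Prop)) (Ω : Set (I → Z → ℝ))
    (f : (I → Z → Z → Prop) → Z) (g : (∀ i, S i) → Lottery Z) : Prop :=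
  ∀ θ ∈ Θ, ∀ u ∈ Ω, Represents u θ → g '' UDoneSet u g = {Lottery.delta (f θ)}

/-- `f` is UD^∞-implemented by the mechanism with outcome function `g`. -/
def UDinfImplements [DecidableEq Z] (Θ : Set (I → Z → Z → Prop)) (Ω : Set (I → Z → ℝ))
    (f : (I → Z → Z → Prop) → Z) (g : (∀ i, S i) → Lottery Z) : Prop :=
  ∀ θ ∈ Θ, ∀ u ∈ Ω, Represents u θ → g '' UDinfSet u g = {Lottery.delta (f θ)}

/-- `Θ^{(i1,i2)-z}`: strict states where `z` is second-best for both `i1` and `i2`,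
whose top-ranked outcomes differ. -/
def ThetaSecond [Fintype Z] (i1 i2 : I) (z : Z) : Set (I → Z → Z → Prop) :=
  {θ ∈ ThetaStrict I Z |
    Set.ncard {z' | θ i1 z z'} = Fintype.card Z - 1 ∧
    Set.ncard {z' | θ i2 z z'} = Fintype.card Z - 1 ∧
    {z' | θ i1 z z'} ≠ {z' | θ i2 z z'}}

end
section Aux
open Function
variable {Z : Type} [Fintype Z] [DecidableEq Z]

lemma expUtil_delta (u : Z → ℝ) (w : Z) : expUtil u (Lottery.delta w) = u w := by
  simp [expUtil, Lottery.delta, ite_mul]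

lemma expUtil_le {u : Z → ℝ} {c : ℝ} (h : ∀ x, u x ≤ c) (y : Lottery Z) :
    expUtil u y ≤ c := by
  have h1 : expUtil u y ≤ ∑ x, y.1 x * c :=
    Finset.sum_le_sum fun x _ => mul_le_mul_of_nonneg_left (h x) (y.2.1 x)
  have h2 : ∑ x, y.1 x * c = c := by rw [← Finset.sum_mul, y.2.2, one_mul]
  linarith

lemma le_expUtil {u : Z → ℝ} {c : ℝ} (h : ∀ x, c ≤ u x) (y : Lottery Z) :
    c ≤ expUtil u y := by
  have h1 : ∑ x, y.1 x * c ≤ expUtil u y :=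
    Finset.sum_le_sum fun x _ => mul_le_mul_of_nonneg_left (h x) (y.2.1 x)
  have h2 : ∑ x, y.1 x * c = c := by rw [← Finset.sum_mul, y.2.2, one_mul]
  linarith

lemma delta_inj {z w : Z} (h : Lottery.delta z = Lottery.delta w) : z = w := by
  by_contra hne
  have h2 := congrArg (fun y : Lottery Z => y.1 z) h
  simp [Lottery.delta, hne] at h2

lemma exists_undominated {I Z : Type} [Fintype Z] [DecidableEq I] {S : I → Type}
    [∀ i, Finite (S i)] (hne : ∀ i, Nonempty (S i))
    (u : I → Z → ℝ) (g : (∀ i, S i) → Lottery Z) (j : I) (sj : S j) :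
    ∃ t : S j, ¬ Dominated u g (fun _ => Set.univ) j t ∧
      (t = sj ∨ ∀ p : ∀ k, S k,
        expUtil (u j) (g (update p j sj)) < expUtil (u j) (g (update p j t))) := by
  classical
  set rel : S j → S j → Prop := fun t s => ∀ p : ∀ k, S k,
      expUtil (u j) (g (update p j s)) < expUtil (u j) (g (update p j t)) with hrel
  have hdom : ∀ s : S j, Dominated u g (fun _ => Set.univ) j s ↔ ∃ t, rel t s := by
    intro s
    constructor
    · rintro ⟨t, ht⟩; exact ⟨t, fun p => ht p (fun k _ => Set.mem_univ _)⟩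
    · rintro ⟨t, ht⟩; exact ⟨t, fun p _ => ht p⟩
  haveI : IsTrans (S j) rel := ⟨fun a b c hab hbc p => (hbc p).trans (hab p)⟩
  haveI : IsIrrefl (S j) rel := ⟨fun a ha => lt_irrefl _ (ha (fun k => (hne k).some))⟩
  have wf := Finite.wellFounded_of_trans_of_irrefl rel
  refine wf.induction (C := fun s => ∃ t : S j, ¬ Dominated u g (fun _ => Set.univ) j t ∧
      (t = s ∨ rel t s)) sj ?_
  intro s IH
  by_cases h : ∃ t, rel t s
  · obtain ⟨t, ht⟩ := h
    obtain ⟨t', ht'1, ht'2⟩ := IH t ht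
    refine ⟨t', ht'1, Or.inr ?_⟩
    rcases ht'2 with rfl | h2
    · exact ht
    · exact fun p => (ht p).trans (h2 p)
  · exact ⟨s, fun hd => h ((hdom s).1 hd), Or.inl rfl⟩

end Aux

/-- **Lemma 2 (Xiong).** If `f` is UD-implemented by a stochastic finite-action mechanism
`⟨S, g⟩`, then for all `i` and distinct outcomes `z ≠ z'`, the inclusion `S_i^z ⊆ S_i^{z'}`
implies `S_i^z = S_i^{z'} = S_i`. -/
theorem Sz_subset_implies_univ_UD
    {I Z : Type} [Fintype I] [Fintype Z] [DecidableEq I] [DecidableEq Z]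
    (hI : 2 ≤ Fintype.card I) (hZ : 2 ≤ Fintype.card Z)
    (Θ : Set (I → Z → Z → Prop)) (Ω : Set (I → Z → ℝ)) (f : (I → Z → Z → Prop) → Z)
    (hCIP : CIProblem Θ Ω)
    (hsurj : ∀ z : Z, ∃ θ ∈ Θ, f θ = z)
    (hsub1 : ThetaUna I Z ∩ ThetaStrict I Z ⊆ Θ) (hsub2 : Θ ⊆ ThetaStrict I Z)
    (S : I → Type) (hfin : ∀ i, Finite (S i)) (hne : ∀ i, Nonempty (S i))
    (g : (∀ i, S i) → Lottery Z) (himp : UDImplements Θ Ω f g) :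
    ∀ (i : I) (z z' : Z), z ≠ z' → Sz g i z ⊆ Sz g i z' →
      Sz g i z = (Set.univ : Set (S i)) ∧ Sz g i z' = (Set.univ : Set (S i)) := by
  classical
  haveI : ∀ i, Finite (S i) := hfin
  intro i z z' hzz hsubset
  -- UDk at level 0 is everything
  have hUD0 : ∀ (u : I → Z → ℝ), UDk (S := S) u g 0 = fun _ => Set.univ := fun _ => rfl
  have hUD1 : ∀ (u : I → Z → ℝ) (j : I) (sj : S j),
      sj ∈ UDk u g 1 j ↔ ¬ Dominated u g (fun _ => Set.univ) j sj := by
    intro u j sj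
    show sj ∈ {s ∈ UDk u g 0 j | ¬ Dominated u g (UDk u g 0) j s} ↔ _
    rw [hUD0]
    simp [Set.mem_setOf_eq]
  -- Claim A: if w is a (weak) top outcome for agent j at u, every strategy in Sz g j w
  -- is undominated at u.
  have claimA : ∀ (w : Z) (u : I → Z → ℝ), (∀ j x, u j x ≤ u j w) →
      ∀ (j : I) (sj : S j), sj ∈ Sz g j w → ¬ Dominated u g (fun _ => Set.univ) j sj := by
    rintro w u htop j sj ⟨s, hsj, hgs⟩ ⟨t, ht⟩
    have h1 := ht s (fun k _ => Set.mem_univ _)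
    have hupd : Function.update s j sj = s := by rw [← hsj]; exact Function.update_eq_self j s
    rw [hupd, hgs, expUtil_delta] at h1
    exact absurd h1 (not_lt.2 (expUtil_le (htop j) _))
  -- every outcome is reachable
  have hreach : ∀ w : Z, ∃ s : ∀ j, S j, g s = Lottery.delta w := by
    intro w
    obtain ⟨θ0, hθ0, hf0⟩ := hsurj w
    obtain ⟨u0, hu0, hrep0⟩ := hCIP.2.2 θ0 hθ0
    have himpl := himp θ0 hθ0 u0 hu0 hrep0
    choose t ht1 _ using fun j => exists_undominated hne u0 g j ((hne j).some)
    have hmem : (fun j => t j) ∈ UDoneSet u0 g := fun j => (hUD1 u0 j (t j)).2 (ht1 j)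
    have : g (fun j => t j) ∈ ({Lottery.delta (f θ0)} : Set (Lottery Z)) := by
      rw [← himpl]; exact ⟨_, hmem, rfl⟩
    exact ⟨fun j => t j, by rw [Set.mem_singleton_iff.1 this, hf0]⟩
  -- build the unanimous strict state with z on top and z' at the bottom
  set n := Fintype.card Z with hn
  set e : Z → ℝ := fun w => ((Fintype.equivFin Z w : ℕ) : ℝ) with he
  have he_lt : ∀ w, e w < n := fun w => by
    show ((Fintype.equivFin Z w : ℕ) : ℝ) < ((Fintype.card Z : ℕ) : ℝ)
    exact_mod_cast (Fintype.equivFin Z w).2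
  have he_nonneg : ∀ w, 0 ≤ e w := fun w => Nat.cast_nonneg _
  have he_inj : Function.Injective e := fun a b hab => by
    have : ((Fintype.equivFin Z a : ℕ) : ℝ) = ((Fintype.equivFin Z b : ℕ) : ℝ) := hab
    exact (Fintype.equivFin Z).injective (Fin.ext (by exact_mod_cast this))
  have hn1 : (1 : ℝ) ≤ (n : ℝ) := by exact_mod_cast Nat.one_le_of_lt hZ
  set v : Z → ℝ := fun w => if w = z then (n : ℝ) else if w = z' then -1 else e w with hv
  have hvz : v z = n := by simp [hv]
  have hvz' : v z' = -1 := by simp [hv, hzz.symm]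
  have hv_max : ∀ w, v w ≤ v z := by
    intro w
    rw [hvz]
    by_cases h1 : w = z
    · simp [hv, h1]
    · by_cases h2 : w = z'
      · rw [h2, hvz']; linarith
      · simp only [hv, if_neg h1, if_neg h2]
        exact (he_lt w).le
  have hv_min : ∀ w, v z' ≤ v w := by
    intro w
    rw [hvz']
    by_cases h1 : w = z
    · rw [h1, hvz]; linarith
    · by_cases h2 : w = z'
      · rw [h2, hvz']
      · simp only [hv, if_neg h1, if_neg h2]
        have := he_nonneg w; linarith
  have hv_inj : Function.Injective v := by
    intro a b hab
    by_cases ha : a = z <;> by_cases hb : b = z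
    · rw [ha, hb]
    · exfalso
      rw [ha, hvz] at hab
      by_cases hb' : b = z'
      · rw [hb', hvz'] at hab; linarith
      · simp only [hv, if_neg hb, if_neg hb'] at hab
        have := he_lt b; linarith
    · exfalso
      rw [hb, hvz] at hab
      by_cases ha' : a = z'
      · rw [ha', hvz'] at hab; linarith
      · simp only [hv, if_neg ha, if_neg ha'] at hab
        have := he_lt a; linarith
    · by_cases ha' : a = z' <;> by_cases hb' : b = z'
      · rw [ha', hb']
      · exfalso
        rw [ha', hvz'] at hab
        simp only [hv, if_neg hb, if_neg hb'] at hab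
        have := he_nonneg b; linarith
      · exfalso
        rw [hb', hvz'] at hab
        simp only [hv, if_neg ha, if_neg ha'] at hab
        have := he_nonneg a; linarith
      · simp only [hv, if_neg ha, if_neg ha', if_neg hb, if_neg hb'] at hab
        exact he_inj hab
  set θ : I → Z → Z → Prop := fun _ a b => v b ≤ v a with hθdef
  have hθΘ : θ ∈ Θ := by
    apply hsub1
    constructor
    · exact ⟨fun j => ⟨fun a b => le_total (v b) (v a), fun a b c hab hbc => le_trans hbc hab⟩,
        fun _ _ _ _ => Iff.rfl⟩
    · exact ⟨fun j => ⟨fun a b => le_total (v b) (v a), fun a b c hab hbc => le_trans hbc hab⟩,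
        fun j a b h1 h2 => hv_inj (le_antisymm h2 h1)⟩
  obtain ⟨u, huΩ, hrep⟩ := hCIP.2.2 θ hθΘ
  have hmaxle : ∀ j w, u j w ≤ u j z := fun j w => (hrep j z w).1 (hv_max w)
  have hminle : ∀ j w, u j z' ≤ u j w := fun j w => (hrep j w z').1 (hv_min w)
  have himpl := himp θ hθΘ u huΩ hrep
  have hUDimg : ∀ s ∈ UDoneSet u g, g s = Lottery.delta (f θ) := by
    intro s hs
    have : g s ∈ ({Lottery.delta (f θ)} : Set (Lottery Z)) := by
      rw [← himpl]; exact ⟨s, hs, rfl⟩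
    exact Set.mem_singleton_iff.1 this
  -- f θ = z
  obtain ⟨sstar, hsstar⟩ := hreach z
  have hsmem : sstar ∈ UDoneSet u g := fun j =>
    (hUD1 u j (sstar j)).2 (claimA z u hmaxle j (sstar j) ⟨sstar, rfl, hsstar⟩)
  have hfz : f θ = z := (delta_inj (hsstar ▸ hUDimg sstar hsmem)).symm
  -- every strategy of agent i reaches z
  have hall : ∀ si : S i, si ∈ Sz g i z := by
    intro si
    obtain ⟨t, htund, htcase⟩ := exists_undominated hne u g i si
    choose t0 ht0 _ using fun j => exists_undominated hne u g j ((hne j).some)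
    set p : ∀ j, S j := Function.update (fun j => t0 j) i t with hp
    have hpmem : p ∈ UDoneSet u g := by
      intro j
      apply (hUD1 u j (p j)).2
      by_cases hj : j = i
      · subst hj; rw [hp, Function.update_self]; exact htund
      · rw [hp, Function.update_of_ne hj]; exact ht0 j
    have hgp : g p = Lottery.delta z := by rw [hUDimg p hpmem, hfz]
    have htz : t ∈ Sz g i z := ⟨p, Function.update_self i t _, hgp⟩
    rcases htcase with rfl | hrel
    · exact htz
    · exfalso
      obtain ⟨q, hq1, hq2⟩ := hsubset htz
      have h1 := hrel q
      have hupd : Function.update q i t = q := by rw [← hq1]; exact Function.update_eq_self i q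
      rw [hupd, hq2, expUtil_delta] at h1
      exact absurd h1 (not_lt.2 (le_expUtil (hminle i) _))
  refine ⟨Set.eq_univ_of_forall hall, Set.eq_univ_of_forall fun si => hsubset (hall si)⟩
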